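/- arXiv:1809.08838 — 4 statements merged into one kernel-verified Lean document; each statement's English description precedes it below -/
import Mathlib

section
/- Let $m \ge 1$, let $A, B$ be $m \times m$ real symmetric positive semidefinite matrices, and let $\mu > 0$. If $AB + BA = 2\mu I$, then $A$ and $B$ are positive definite, they commute, and $AB = \mu I$. -/
/-!
For positive semidefinite `A`, `xᴴAx = 0` forces `Ax = 0`, and then pairing `AB + BA = 2μI`
with `x` gives `2μ‖x‖² = 0`; so `A` (and symmetrically `B`) is positive definite. The defect `D = AB - μI` is
skew-symmetric, because `(AB)ᵀ = BA = 2μI - AB`, and anticommutes with `A`, because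
`AD + DA = A(AB + BA) - 2μA = 0`. Anticommutation forces `tr(DAD) = -tr(ADD) = -tr(DAD)`, so the
positive semidefinite matrix `DᵀAD = -DAD` has trace zero, hence vanishes, and positive
definiteness of `A` gives `D = 0`.
-/

open Matrix

namespace Matrix

open scoped ComplexOrder

variable {n 𝕜 : Type*} [Fintype n] [RCLike 𝕜]

theorem PosSemidef.posDef_of_mul_add_mul_eq_smul_one [DecidableEq n] {A B : Matrix n n 𝕜}
    {c : ℝ} (hA : A.PosSemidef) (hc : 0 < c) (h : A * B + B * A = c • 1) : A.PosDef := by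
  refine .of_dotProduct_mulVec_pos hA.1 fun x hx => ?_
  refine lt_of_le_of_ne (hA.dotProduct_mulVec_nonneg x) fun hzero => hx ?_
  have hAx : A *ᵥ x = 0 := (hA.dotProduct_mulVec_zero_iff x).mp hzero.symm
  have hxA : star x ᵥ* A = 0 := by
    rw [← hA.1.eq, ← star_mulVec, hAx, star_zero]
  have hform := congrArg (fun M => star x ⬝ᵥ M *ᵥ x) h
  simp only [add_mulVec, ← mulVec_mulVec, hAx, mulVec_zero, dotProduct_mulVec (star x) A, hxA,
    zero_dotProduct, add_zero, smul_mulVec, one_mulVec] at hform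
  rw [dotProduct_smul, eq_comm, smul_eq_zero, dotProduct_star_self_eq_zero] at hform
  exact hform.resolve_left hc.ne'

theorem PosDef.eq_zero_of_mul_add_mul_eq_zero {A D : Matrix n n 𝕜} (hA : A.PosDef)
    (hD : Dᴴ = -D) (h : A * D + D * A = 0) : D = 0 := by
  have htrace : (D * A * D).trace = 0 := by
    have hcycle : (D * A * D).trace = (A * D * D).trace := by rw [mul_assoc, trace_mul_comm]
    have hanti : (D * A * D).trace = -(A * D * D).trace := by
      rw [eq_neg_of_add_eq_zero_right h, neg_mul, trace_neg]
    linear_combination (hcycle + hanti) / 2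
  have hzero : Dᴴ * A * D = 0 := by
    rw [← (hA.posSemidef.conjTranspose_mul_mul_same D).trace_eq_zero_iff, hD, neg_mul, neg_mul,
      trace_neg, htrace, neg_zero]
  refine ext_iff_mulVec.mpr fun v => ?_
  by_contra hne
  rw [zero_mulVec] at hne
  have hpos := hA.dotProduct_mulVec_pos hne
  rw [star_mulVec, ← dotProduct_mulVec, mulVec_mulVec, mulVec_mulVec, hzero, zero_mulVec,
    dotProduct_zero] at hpos
  exact hpos.false

end Matrix

theorem stmt_1_general {m : ℕ} (A B : Matrix (Fin m) (Fin m) ℝ)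
    (hA : A.PosSemidef) (hB : B.PosSemidef) (μ : ℝ) (hμ : 0 < μ)
    (h : A * B + B * A = (2 * μ) • (1 : Matrix (Fin m) (Fin m) ℝ)) :
    A.PosDef ∧ B.PosDef ∧ A * B = B * A ∧ A * B = μ • (1 : Matrix (Fin m) (Fin m) ℝ) := by
  have h2μ : 0 < 2 * μ := by positivity
  have hApd : A.PosDef := hA.posDef_of_mul_add_mul_eq_smul_one h2μ h
  have hBpd : B.PosDef := hB.posDef_of_mul_add_mul_eq_smul_one h2μ (by rwa [add_comm])
  have hBA_sub : B * A = (2 * μ) • 1 - A * B := eq_sub_of_add_eq' h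
  have hskew : (A * B - μ • 1)ᴴ = -(A * B - μ • 1) := by
    rw [conjTranspose_sub, conjTranspose_mul, hA.1.eq, hB.1.eq, conjTranspose_smul, star_trivial,
      conjTranspose_one, hBA_sub, two_mul, add_smul]
    abel
  have hanti : A * (A * B - μ • 1) + (A * B - μ • 1) * A = 0 := by
    calc A * (A * B - μ • 1) + (A * B - μ • 1) * A = A * (A * B + B * A) - (2 * μ) • A := by
          simp only [mul_sub, sub_mul, mul_add, mul_assoc, Matrix.mul_smul, Matrix.smul_mul,
            mul_one, one_mul, two_mul, add_smul]
          abel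
      _ = 0 := by rw [h, Matrix.mul_smul, mul_one, sub_self]
  have hAB : A * B = μ • 1 := sub_eq_zero.mp (hApd.eq_zero_of_mul_add_mul_eq_zero hskew hanti)
  have hBA : B * A = μ • 1 := by rw [hBA_sub, hAB, two_mul, add_smul, add_sub_cancel_right]
  exact ⟨hApd, hBpd, hAB.trans hBA.symm, hAB⟩

/-- If `A, B` are symmetric positive semidefinite and their Jordan product is `μ I`
(`AB + BA = 2μI`) with `μ > 0`, then `A, B` are positive definite, commute, and `AB = μ I`. -/
theorem stmt_1 {m : ℕ} (hm : 1 ≤ m) (A B : Matrix (Fin m) (Fin m) ℝ)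
    (hA : A.PosSemidef) (hB : B.PosSemidef) (μ : ℝ) (hμ : 0 < μ)
    (h : A * B + B * A = (2 * μ) • (1 : Matrix (Fin m) (Fin m) ℝ)) :
    A.PosDef ∧ B.PosDef ∧ A * B = B * A ∧ A * B = μ • (1 : Matrix (Fin m) (Fin m) ℝ) :=
  stmt_1_general A B hA hB μ hμ h
end

section
/- Let $m \ge 1$, let $F, V$ be $m \times m$ real symmetric positive definite matrices, let $D$ be an $m \times m$ real symmetric matrix, and let $\mu > 0$. Let $F^{1/2}$ and $F^{-1/2}$ denote the positive definite square root of $F$ and its inverse. Define $\Delta V := \mu F^{-1} - V - \tfrac{1}{2}\left(F^{-1} D V + V D F^{-1}\right)$. Then $\Delta V$ is symmetric and satisfies the scaled Newton equation with scaling matrix $P = F^{-1/2}$: namely, $F^{1/2} V F^{1/2} + \left(F^{-1/2} D F^{-1/2}\right) \circ \left(F^{1/2} V F^{1/2}\right) + F^{1/2} \Delta V F^{1/2} = \mu I$. -/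
open Matrix

section
open scoped ComplexOrder

/-- The square root of a positive semidefinite matrix, as defined in the older Mathlib
(`Matrix.PosSemidef.sqrt`, since removed). -/
noncomputable def Matrix.PosSemidef.sqrt {n 𝕜 : Type*} [Fintype n] [RCLike 𝕜] [DecidableEq n]
    {A : Matrix n n 𝕜} (hA : A.PosSemidef) : Matrix n n 𝕜 :=
  hA.1.eigenvectorUnitary.1 * diagonal ((↑) ∘ (√·) ∘ hA.1.eigenvalues) *
  (star hA.1.eigenvectorUnitary : Matrix n n 𝕜)

end

/-! With `P = F^{-1/2} = S⁻¹` for a square root `S` of `F`, we have `F⁻¹ = S⁻¹ S⁻¹`. Multiplying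
out `S ΔV S`, the symmetrisation term of `ΔV` cancels the Jordan product exactly,
`S (μ F⁻¹) S = μ I`, and `S (-V) S` cancels `S V S`; so the Newton equation is an identity in
any algebra once `S` is invertible. -/

section HKMDirection

variable {R A : Type*} [Field R] [Ring A] [Algebra R A]

/-- The HRVW/KSH/M search direction; `Finv` stands for `F⁻¹`. -/
def hkmDirection (μ : R) (Finv V D : A) : A :=
  μ • Finv - V - (1 / 2 : R) • (Finv * D * V + V * D * Finv)

theorem IsSelfAdjoint.hkmDirection [StarRing R] [TrivialStar R] [StarRing A] [StarModule R A]
    (μ : R) {Finv V D : A} (hF : IsSelfAdjoint Finv) (hV : IsSelfAdjoint V)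
    (hD : IsSelfAdjoint D) : IsSelfAdjoint (hkmDirection μ Finv V D) := by
  unfold _root_.hkmDirection
  refine (((IsSelfAdjoint.all μ).smul hF).sub hV).sub ((IsSelfAdjoint.all _).smul ?_)
  simp only [IsSelfAdjoint, star_add, star_mul, hF.star_eq, hV.star_eq, hD.star_eq,
    mul_assoc, add_comm]

theorem hkmDirection_scaled_newton {S Sinv : A} (hl : Sinv * S = 1) (hr : S * Sinv = 1)
    (μ : R) (V D : A) :
    S * V * S + (1 / 2 : R) • (Sinv * D * Sinv * (S * V * S) + S * V * S * (Sinv * D * Sinv))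
      + S * hkmDirection μ (Sinv * Sinv) V D * S = μ • 1 := by
  have cancel_left (X : A) : Sinv * (S * X) = X := by rw [← mul_assoc, hl, one_mul]
  have cancel_right (X : A) : S * (Sinv * X) = X := by rw [← mul_assoc, hr, one_mul]
  simp only [_root_.hkmDirection, mul_sub, sub_mul, mul_add, add_mul, mul_smul_comm,
    smul_mul_assoc, mul_assoc, cancel_left, cancel_right, hl, mul_one]
  abel

end HKMDirection

open scoped ComplexOrder in
theorem Matrix.PosSemidef.sqrt_mul_self {n 𝕜 : Type*} [Fintype n] [RCLike 𝕜] [DecidableEq n]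
    {A : Matrix n n 𝕜} (hA : A.PosSemidef) : hA.sqrt * hA.sqrt = A := by
  have hU : (star hA.1.eigenvectorUnitary : Matrix n n 𝕜) * hA.1.eigenvectorUnitary.1 = 1 :=
    Unitary.star_mul_self_of_mem hA.1.eigenvectorUnitary.2
  have hD : diagonal (((↑) ∘ (√·) ∘ hA.1.eigenvalues : n → 𝕜)) *
      diagonal ((↑) ∘ (√·) ∘ hA.1.eigenvalues) = diagonal (RCLike.ofReal ∘ hA.1.eigenvalues) := by
    rw [diagonal_mul_diagonal]
    congr 1
    funext i
    simp only [Function.comp_apply]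
    rw [← RCLike.ofReal_mul, Real.mul_self_sqrt (hA.eigenvalues_nonneg i)]
  conv_rhs => rw [hA.1.spectral_theorem, Unitary.conjStarAlgAut_apply]
  unfold Matrix.PosSemidef.sqrt
  simp only [Matrix.mul_assoc]
  rw [← Matrix.mul_assoc (star _ : Matrix n n 𝕜) _ (diagonal _ * _), hU, Matrix.one_mul,
    ← Matrix.mul_assoc (diagonal _), hD]

open scoped ComplexOrder in
theorem Matrix.PosSemidef.isUnit_det_sqrt {n 𝕜 : Type*} [Fintype n] [RCLike 𝕜] [DecidableEq n]
    {A : Matrix n n 𝕜} (hA : A.PosSemidef) (hdet : IsUnit A.det) : IsUnit hA.sqrt.det := by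
  rw [← hA.sqrt_mul_self, det_mul] at hdet
  exact isUnit_of_mul_isUnit_left hdet

theorem stmt_5_general {m : ℕ} (F V D ΔV : Matrix (Fin m) (Fin m) ℝ)
    (hF : F.PosDef) (hV : V.PosDef) (hD : D.IsHermitian) (μ : ℝ)
    (hΔV : ΔV = μ • F⁻¹ - V - (1/2 : ℝ) • (F⁻¹ * D * V + V * D * F⁻¹)) :
    ΔV.IsHermitian ∧
    hF.posSemidef.sqrt * V * hF.posSemidef.sqrt
      + (1/2 : ℝ) • ((hF.posSemidef.sqrt⁻¹ * D * hF.posSemidef.sqrt⁻¹) *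
            (hF.posSemidef.sqrt * V * hF.posSemidef.sqrt)
          + (hF.posSemidef.sqrt * V * hF.posSemidef.sqrt) *
            (hF.posSemidef.sqrt⁻¹ * D * hF.posSemidef.sqrt⁻¹))
      + hF.posSemidef.sqrt * ΔV * hF.posSemidef.sqrt
      = μ • (1 : Matrix (Fin m) (Fin m) ℝ) := by
  replace hΔV : ΔV = hkmDirection μ F⁻¹ V D := hΔV
  set S := hF.posSemidef.sqrt
  have hS : IsUnit S.det := hF.posSemidef.isUnit_det_sqrt hF.det_pos.ne'.isUnit
  have hFinv : F⁻¹ = S⁻¹ * S⁻¹ := by rw [← hF.posSemidef.sqrt_mul_self, Matrix.mul_inv_rev]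
  subst hΔV
  refine ⟨hF.isHermitian.inv.isSelfAdjoint.hkmDirection μ hV.isHermitian hD, ?_⟩
  rw [hFinv]
  exact hkmDirection_scaled_newton (nonsing_inv_mul S hS) (mul_nonsing_inv S hS) μ V D

/-- The HRVW/KSH/M direction `ΔV = μF⁻¹ - V - (F⁻¹DV + VDF⁻¹)/2` is symmetric and
satisfies the scaled Newton equation with scaling matrix `P = F^{-1/2}`:
`F^{1/2} V F^{1/2} + (F^{-1/2} D F^{-1/2}) ∘ (F^{1/2} V F^{1/2}) + F^{1/2} ΔV F^{1/2} = μ I`. -/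
theorem stmt_5 {m : ℕ} (hm : 1 ≤ m) (F V D ΔV : Matrix (Fin m) (Fin m) ℝ)
    (hF : F.PosDef) (hV : V.PosDef) (hD : D.IsHermitian) (μ : ℝ) (hμ : 0 < μ)
    (hΔV : ΔV = μ • F⁻¹ - V - (1/2 : ℝ) • (F⁻¹ * D * V + V * D * F⁻¹)) :
    ΔV.IsHermitian ∧
    hF.posSemidef.sqrt * V * hF.posSemidef.sqrt
      + (1/2 : ℝ) • ((hF.posSemidef.sqrt⁻¹ * D * hF.posSemidef.sqrt⁻¹) *
            (hF.posSemidef.sqrt * V * hF.posSemidef.sqrt)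
          + (hF.posSemidef.sqrt * V * hF.posSemidef.sqrt) *
            (hF.posSemidef.sqrt⁻¹ * D * hF.posSemidef.sqrt⁻¹))
      + hF.posSemidef.sqrt * ΔV * hF.posSemidef.sqrt
      = μ • (1 : Matrix (Fin m) (Fin m) ℝ) :=
  stmt_5_general F V D ΔV hF hV hD μ hΔV
end

section
/- Let $m \ge 1$, let $\tilde F, \tilde V$ be $m \times m$ real symmetric positive definite matrices that commute ($\tilde F \tilde V = \tilde V \tilde F$), let $\tilde D, \Delta\tilde V$ be $m \times m$ real symmetric matrices, and let $\mu > 0$. If the scaled Newton equation $\tilde F \circ \tilde V + \tilde D \circ \tilde V + \tilde F \circ \Delta \tilde V = \mu I$ holds, then $\mu\, \mathrm{Tr}\left(\tilde F^{-1} \tilde D + \tilde V^{-1} \Delta\tilde V\right) = \mathrm{Tr}\left(\mu^2 \tilde F^{-1} \tilde V^{-1}\right) - m\mu$. -/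
/-! Multiply the Newton equation by `F̃⁻¹Ṽ⁻¹` and take traces. Because `F̃` and `Ṽ` commute, each also
commutes with the other's inverse, and cyclicity of the trace turns `Tr(F̃⁻¹Ṽ⁻¹(X∘Ṽ))` into `Tr(F̃⁻¹X)`;
the three Jordan products become `m`, `Tr(F̃⁻¹D̃)` and `Tr(Ṽ⁻¹ΔṼ)`. -/

open Matrix

namespace Matrix

variable {n R : Type*} [Fintype n] [DecidableEq n] [CommRing R]

theorem commute_nonsing_inv_right {A B : Matrix n n R} (hAB : Commute A B) (hB : IsUnit B.det) :
    Commute A B⁻¹ :=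
  calc A * B⁻¹ = B⁻¹ * (B * A) * B⁻¹ := by
        rw [← Matrix.mul_assoc, nonsing_inv_mul B hB, Matrix.one_mul]
    _ = B⁻¹ * A := by
        rw [← hAB.eq, Matrix.mul_assoc, Matrix.mul_assoc, mul_nonsing_inv B hB, Matrix.mul_one]

theorem commute_nonsing_inv_inv {A B : Matrix n n R} (hAB : Commute A B) :
    Commute A⁻¹ B⁻¹ := by
  rw [Commute, SemiconjBy, ← mul_inv_rev, ← mul_inv_rev, hAB.eq]

theorem trace_inv_mul_inv_mul_add_mul_comm {F V : Matrix n n R} (hFV : Commute F V)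
    (hF : IsUnit F.det) (hV : IsUnit V.det) (X : Matrix n n R) :
    (F⁻¹ * V⁻¹ * (X * V + V * X)).trace = 2 * (F⁻¹ * X).trace := by
  have hVF : V * F⁻¹ = F⁻¹ * V := (commute_nonsing_inv_right hFV.symm hF).eq
  have h₁ : (F⁻¹ * V⁻¹ * (X * V)).trace = (F⁻¹ * X).trace := by
    rw [← Matrix.mul_assoc, trace_mul_comm, ← Matrix.mul_assoc, ← Matrix.mul_assoc, hVF,
      Matrix.mul_assoc F⁻¹, mul_nonsing_inv V hV, Matrix.mul_one]
  have h₂ : (F⁻¹ * V⁻¹ * (V * X)).trace = (F⁻¹ * X).trace := by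
    rw [Matrix.mul_assoc, ← Matrix.mul_assoc V⁻¹, nonsing_inv_mul V hV, Matrix.one_mul]
  rw [Matrix.mul_add, trace_add, h₁, h₂, two_mul]

end Matrix

theorem stmt_7_general {m : ℕ} (tF tV tD ΔtV : Matrix (Fin m) (Fin m) ℝ)
    (htF : tF.PosDef) (htV : tV.PosDef) (hcomm : tF * tV = tV * tF)
    (μ : ℝ)
    (hNewton : (1/2 : ℝ) • (tF * tV + tV * tF) + (1/2 : ℝ) • (tD * tV + tV * tD)
        + (1/2 : ℝ) • (tF * ΔtV + ΔtV * tF) = μ • (1 : Matrix (Fin m) (Fin m) ℝ)) :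
    μ * (tF⁻¹ * tD + tV⁻¹ * ΔtV).trace = ((μ ^ 2) • (tF⁻¹ * tV⁻¹)).trace - (m : ℝ) * μ := by
  have hF : IsUnit tF.det := htF.det_pos.ne'.isUnit
  have hV : IsUnit tV.det := htV.det_pos.ne'.isUnit
  have hFV : Commute tF tV := hcomm
  have hFF := trace_inv_mul_inv_mul_add_mul_comm hFV hF hV tF
  have hD := trace_inv_mul_inv_mul_add_mul_comm hFV hF hV tD
  have hΔ := trace_inv_mul_inv_mul_add_mul_comm hFV.symm hV hF ΔtV
  rw [nonsing_inv_mul tF hF, trace_one, Fintype.card_fin] at hFF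
  rw [← (commute_nonsing_inv_inv hFV).eq, add_comm] at hΔ
  have htrace := congrArg (fun M => (tF⁻¹ * tV⁻¹ * M).trace) hNewton
  simp only [Matrix.mul_add, Matrix.mul_smul, trace_add, trace_smul, Matrix.mul_one,
    smul_eq_mul] at htrace hFF hD hΔ
  rw [trace_add, trace_smul, smul_eq_mul]
  linear_combination μ * (htrace - hFF / 2 - hD / 2 - hΔ / 2)

/-- Trace identity (eq. (24)): if `F̃, Ṽ` are commuting symmetric positive definite
matrices and the scaled Newton equation `F̃∘Ṽ + D̃∘Ṽ + F̃∘ΔṼ = μI` holds, then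
`μ Tr(F̃⁻¹D̃ + Ṽ⁻¹ΔṼ) = Tr(μ² F̃⁻¹Ṽ⁻¹) - mμ`. -/
theorem stmt_7 {m : ℕ} (hm : 1 ≤ m) (tF tV tD ΔtV : Matrix (Fin m) (Fin m) ℝ)
    (htF : tF.PosDef) (htV : tV.PosDef) (hcomm : tF * tV = tV * tF)
    (htD : tD.IsHermitian) (hΔ : ΔtV.IsHermitian) (μ : ℝ) (hμ : 0 < μ)
    (hNewton : (1/2 : ℝ) • (tF * tV + tV * tF) + (1/2 : ℝ) • (tD * tV + tV * tD)
        + (1/2 : ℝ) • (tF * ΔtV + ΔtV * tF) = μ • (1 : Matrix (Fin m) (Fin m) ℝ)) :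
    μ * (tF⁻¹ * tD + tV⁻¹ * ΔtV).trace = ((μ ^ 2) • (tF⁻¹ * tV⁻¹)).trace - (m : ℝ) * μ :=
  stmt_7_general tF tV tD ΔtV htF htV hcomm μ hNewton
end

section
/- Let $n, m, s \ge 1$, let $T$ be a compact metric space, let $a : T \to \mathbb{R}^n$ and $b : T \to \mathbb{R}$ be continuous, let $F_0, F_1, \ldots, F_n$ be $m \times m$ real symmetric matrices with $F(x) := F_0 + \sum_{i=1}^n x_i F_i$, let $G \in \mathbb{R}^{s \times n}$ and $h \in \mathbb{R}^s$. Assume the feasible set $\mathcal{F} := \{x \in \mathbb{R}^n : F(x) \text{ positive semidefinite},\ a(\tau)^{\top}x \le b(\tau) \ \forall \tau \in T,\ Gx = h\}$ is nonempty and compact. Let $\gamma_0 > 0$ and let sequences $x^r, \Delta x^r \in \mathbb{R}^n$, $s_r \in (0,1]$, and $\gamma_r \in (0, \gamma_0]$ satisfy for every $r \ge 0$: $x^{r+1} = x^r + s_r \Delta x^r$, $G x^0 = h$, $G(x^r + \Delta x^r) = h$, $F(x^r)$ is positive definite, and $\max_{\tau \in T}\left(a(\tau)^{\top}(x^r + \Delta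 x^r) - b(\tau)\right) \le \gamma_r$. Then the sequence $\{x^r\}$ is bounded. -/
open Matrix Set Bornology Metric

/-! Each step is a convex combination of points satisfying the affine constraints, so all
iterates lie in the feasible set relaxed to `a(τ)ᵀx - b(τ) ≤ M` for one fixed `M`. The relaxed
feasible sets are jointly convex in `(x, γ)`: shrinking a far point of the level-`M` set towards
a feasible point `x₀` onto a fixed sphere around `x₀` gives a point of that sphere at a level as
small as we like. By compactness of the sphere some point of it is then feasible, which is
impossible once the sphere encloses the bounded feasible set. -/

theorem Matrix.isClosed_setOf_posSemidef {ι R : Type*} [Fintype ι] [Ring R] [PartialOrder R]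
    [StarRing R] [TopologicalSpace R] [IsTopologicalRing R] [ContinuousStar R]
    [OrderClosedTopology R] :
    IsClosed {M : Matrix ι ι R | M.PosSemidef} := by
  simp_rw [posSemidef_iff_dotProduct_mulVec, ofPred_and, ofPred_forall]
  refine .inter (isClosed_eq (by fun_prop) continuous_id) (isClosed_iInter fun v => ?_)
  exact isClosed_le continuous_const
    (continuous_const.dotProduct (continuous_id.matrix_mulVec continuous_const))

theorem Convex.mem_of_step_mem {𝕜 E : Type*} [Field 𝕜] [LinearOrder 𝕜]
    [IsStrictOrderedRing 𝕜] [AddCommGroup E] [Module 𝕜 E] {C : Set E} (hC : Convex 𝕜 C)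
    {x Δx : ℕ → E} {st : ℕ → 𝕜} (hst : ∀ r, st r ∈ Icc 0 1)
    (hupd : ∀ r, x (r + 1) = x r + st r • Δx r) (h0 : x 0 ∈ C) (hstep : ∀ r, x r + Δx r ∈ C)
    (r : ℕ) : x r ∈ C := by
  induction r with
  | zero => exact h0
  | succ r ih =>
    rw [hupd, ← add_sub_cancel_left (x r) (Δx r)]
    exact hC.add_smul_sub_mem ih (hstep r) (hst r)

theorem add_sum_smul_combo_of_add_eq_one {ι M : Type*} [Fintype ι] [AddCommGroup M]
    [Module ℝ M] (F₀ : M) (Fi : ι → M) (x y : ι → ℝ) {α β : ℝ} (hαβ : α + β = 1) :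
    F₀ + ∑ i, (α • x + β • y) i • Fi i =
      α • (F₀ + ∑ i, x i • Fi i) + β • (F₀ + ∑ i, y i • Fi i) := by
  simp only [Pi.add_apply, Pi.smul_apply, smul_eq_mul, add_smul, mul_smul,
    Finset.sum_add_distrib, smul_add, Finset.smul_sum]
  linear_combination (norm := module) -(hαβ • F₀)

section Relaxation

variable {E : Type*} [NormedAddCommGroup E] [NormedSpace ℝ E] {S : ℝ → Set E}

theorem add_smul_sub_mem_of_convex_graph (hS : Convex ℝ {p : E × ℝ | p.1 ∈ S p.2})
    {x y : E} {γ θ : ℝ} (hx : x ∈ S 0) (hy : y ∈ S γ) (hθ : θ ∈ Icc (0 : ℝ) 1) :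
    x + θ • (y - x) ∈ S (θ * γ) := by
  simpa using hS.add_smul_sub_mem (x := (x, 0)) (y := (y, γ)) hx hy hθ

theorem isBounded_of_convex_graph [ProperSpace E] (hmono : Monotone S)
    (hclosed : ∀ γ, IsClosed (S γ)) (hconv : Convex ℝ {p : E × ℝ | p.1 ∈ S p.2})
    (hlim : ⋂ ε > (0 : ℝ), S ε ⊆ S 0) (hne : (S 0).Nonempty) (hbdd : IsBounded (S 0))
    (γ : ℝ) : IsBounded (S γ) := by
  obtain ⟨x₀, hx₀⟩ := hne
  obtain ⟨R, hR⟩ := (isBounded_iff_subset_closedBall x₀).1 hbdd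
  set t := |R| + 1
  have ht : 0 < t := by positivity
  by_contra hunb
  have hfar : ∀ d, ∃ y ∈ S γ, d < dist y x₀ := by
    by_contra! h
    obtain ⟨d, hd⟩ := h
    exact hunb ((isBounded_iff_subset_closedBall x₀).2 ⟨d, hd⟩)
  -- Pulling far points of `S γ` back to the sphere of radius `t` lands in `S ε`,
  -- with `ε` arbitrarily small.
  have hsphere : ∀ ε : Ioi (0 : ℝ), (sphere x₀ t ∩ S ε).Nonempty := by
    rintro ⟨ε, hε : 0 < ε⟩
    obtain ⟨y, hy, hyfar⟩ := hfar (max t (t * γ / ε))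
    have hdist : 0 < dist y x₀ := ht.trans_le ((le_max_left _ _).trans hyfar.le)
    set θ := t / dist y x₀
    have hθ : θ ∈ Icc (0 : ℝ) 1 :=
      ⟨by positivity, (div_le_one hdist).2 ((le_max_left _ _).trans hyfar.le)⟩
    refine ⟨x₀ + θ • (y - x₀), ?_,
      hmono ?_ (add_smul_sub_mem_of_convex_graph hconv hx₀ hy hθ)⟩
    · rw [mem_sphere, dist_eq_norm, add_sub_cancel_left, norm_smul, ← dist_eq_norm,
        Real.norm_of_nonneg hθ.1, div_mul_cancel₀ _ hdist.ne']
    · have h : t * γ / ε ≤ dist y x₀ := (le_max_right _ _).trans hyfar.le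
      rw [div_le_iff₀ hε] at h
      rw [div_mul_eq_mul_div, div_le_iff₀ hdist]
      linarith
  obtain ⟨q, hq⟩ := IsCompact.nonempty_iInter_of_directed_nonempty_isCompact_isClosed
    (fun ε : Ioi (0 : ℝ) => sphere x₀ t ∩ S ε)
    (Monotone.directed_ge fun _ _ h => inter_subset_inter_right _ (hmono h)) hsphere
    (fun ε => (isCompact_sphere x₀ t).inter_right (hclosed ε))
    (fun ε => isClosed_sphere.inter (hclosed ε))
  simp only [mem_iInter, Subtype.forall, mem_Ioi] at hq
  have hq0 : q ∈ S 0 := hlim (mem_iInter₂.2 fun ε hε => (hq ε hε).2)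
  have hqt : dist q x₀ = t := (hq 1 one_pos).1
  have hqR : dist q x₀ ≤ R := hR hq0
  linarith [le_abs_self R]

end Relaxation

section Feasibility

variable {ι κ σ T : Type*} [Fintype ι]
  (F₀ : Matrix κ κ ℝ) (Fi : ι → Matrix κ κ ℝ) (a : T → ι → ℝ) (b : T → ℝ)
  (G : Matrix σ ι ℝ) (h : σ → ℝ)

def linearConstraintSet (γ : ℝ) : Set (ι → ℝ) :=
  {x | (∀ τ, a τ ⬝ᵥ x - b τ ≤ γ) ∧ G *ᵥ x = h}

def relaxedFeasibleSet (γ : ℝ) : Set (ι → ℝ) :=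
  {x | (F₀ + ∑ i, x i • Fi i).PosSemidef} ∩ linearConstraintSet a b G h γ

variable {F₀ Fi a b G h}

theorem combo_mem_linearConstraintSet {x y : ι → ℝ} {γ₁ γ₂ α β : ℝ}
    (hx : x ∈ linearConstraintSet a b G h γ₁) (hy : y ∈ linearConstraintSet a b G h γ₂)
    (hα : 0 ≤ α) (hβ : 0 ≤ β) (hαβ : α + β = 1) :
    α • x + β • y ∈ linearConstraintSet a b G h (α * γ₁ + β * γ₂) := by
  refine ⟨fun τ => ?_, ?_⟩
  · have h₁ := mul_le_mul_of_nonneg_left (hx.1 τ) hα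
    have h₂ := mul_le_mul_of_nonneg_left (hy.1 τ) hβ
    rw [dotProduct_add, dotProduct_smul, dotProduct_smul, smul_eq_mul, smul_eq_mul]
    linear_combination h₁ + h₂ + b τ * hαβ
  · rw [mulVec_add, mulVec_smul, mulVec_smul, hx.2, hy.2, ← add_smul, hαβ, one_smul]

variable (a b G h) in
theorem convex_linearConstraintSet (γ : ℝ) : Convex ℝ (linearConstraintSet a b G h γ) :=
  fun _ hx _ hy _ _ hα hβ hαβ => by
    simpa [← add_mul, hαβ] using combo_mem_linearConstraintSet hx hy hα hβ hαβ

theorem linearConstraintSet_mono : Monotone (linearConstraintSet a b G h) :=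
  fun _ _ hγ _ hx => ⟨fun τ => (hx.1 τ).trans hγ, hx.2⟩

theorem isClosed_linearConstraintSet (γ : ℝ) : IsClosed (linearConstraintSet a b G h γ) := by
  simp_rw [linearConstraintSet, ofPred_and, ofPred_forall]
  exact .inter (isClosed_iInter fun τ => isClosed_le
      ((continuous_const.dotProduct continuous_id).sub continuous_const) continuous_const)
    (isClosed_eq (continuous_const.matrix_mulVec continuous_id) continuous_const)

theorem iInter_linearConstraintSet_subset :
    ⋂ ε > (0 : ℝ), linearConstraintSet a b G h ε ⊆ linearConstraintSet a b G h 0 := by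
  intro x hx
  simp only [mem_iInter] at hx
  exact ⟨fun τ => le_of_forall_pos_le_add fun ε hε => by simpa using (hx ε hε).1 τ,
    (hx 1 one_pos).2⟩

theorem relaxedFeasibleSet_zero :
    relaxedFeasibleSet F₀ Fi a b G h 0 =
      {x | (F₀ + ∑ i, x i • Fi i).PosSemidef ∧ (∀ τ, a τ ⬝ᵥ x ≤ b τ) ∧ G *ᵥ x = h} := by
  ext x
  simp only [relaxedFeasibleSet, linearConstraintSet, mem_inter_iff, mem_ofPred_eq, sub_nonpos]

variable (F₀ Fi) in
theorem convex_setOf_posSemidef_add_sum_smul :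
    Convex ℝ {x : ι → ℝ | (F₀ + ∑ i, x i • Fi i).PosSemidef} :=
  fun x hx y hy α β hα hβ hαβ => by
    simpa only [mem_ofPred_eq, add_sum_smul_combo_of_add_eq_one F₀ Fi x y hαβ]
      using (hx.smul hα).add (hy.smul hβ)

theorem isBounded_relaxedFeasibleSet [Fintype κ]
    (hne : (relaxedFeasibleSet F₀ Fi a b G h 0).Nonempty)
    (hbdd : IsBounded (relaxedFeasibleSet F₀ Fi a b G h 0)) (γ : ℝ) :
    IsBounded (relaxedFeasibleSet F₀ Fi a b G h γ) := by
  refine isBounded_of_convex_graph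
    (fun _ _ hγ => inter_subset_inter_right _ (linearConstraintSet_mono hγ))
    (fun γ => .inter (Matrix.isClosed_setOf_posSemidef.preimage (by fun_prop))
      (isClosed_linearConstraintSet γ)) ?_ ?_ hne hbdd γ
  · rintro ⟨x, γ₁⟩ ⟨hxP, hxL⟩ ⟨y, γ₂⟩ ⟨hyP, hyL⟩ α β hα hβ hαβ
    exact ⟨convex_setOf_posSemidef_add_sum_smul F₀ Fi hxP hyP hα hβ hαβ,
      combo_mem_linearConstraintSet hxL hyL hα hβ hαβ⟩
  · intro x hx
    simp only [mem_iInter] at hx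
    exact ⟨(hx 1 one_pos).1,
      iInter_linearConstraintSet_subset (mem_iInter₂.2 fun ε hε => (hx ε hε).2)⟩

end Feasibility

theorem stmt_12_general {n m s : ℕ}
    {T : Type*} [MetricSpace T] [CompactSpace T]
    (a : T → (Fin n → ℝ)) (b : T → ℝ) (ha : Continuous a) (hb : Continuous b)
    (F₀ : Matrix (Fin m) (Fin m) ℝ) (Fi : Fin n → Matrix (Fin m) (Fin m) ℝ)
    (G : Matrix (Fin s) (Fin n) ℝ) (h : Fin s → ℝ)
    (hfeas_ne : {x : Fin n → ℝ |
        (F₀ + ∑ i, x i • Fi i).PosSemidef ∧ (∀ τ, a τ ⬝ᵥ x ≤ b τ) ∧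
          G.mulVec x = h}.Nonempty)
    (hfeas_cpt : IsCompact {x : Fin n → ℝ |
        (F₀ + ∑ i, x i • Fi i).PosSemidef ∧ (∀ τ, a τ ⬝ᵥ x ≤ b τ) ∧
          G.mulVec x = h})
    (γ₀ : ℝ)
    (x Δx : ℕ → (Fin n → ℝ)) (st γ : ℕ → ℝ)
    (hst : ∀ r, st r ∈ Set.Ioc (0 : ℝ) 1)
    (hγ : ∀ r, γ r ∈ Set.Ioc (0 : ℝ) γ₀)
    (hupd : ∀ r, x (r + 1) = x r + st r • Δx r)
    (hx0 : G.mulVec (x 0) = h)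
    (heq : ∀ r, G.mulVec (x r + Δx r) = h)
    (hpd : ∀ r, (F₀ + ∑ i, (x r) i • Fi i).PosDef)
    (hsi : ∀ r, ∀ τ, a τ ⬝ᵥ (x r + Δx r) - b τ ≤ γ r) :
    ∃ C : ℝ, ∀ r, ‖x r‖ ≤ C := by
  obtain ⟨M, hM⟩ : BddAbove (range fun τ => a τ ⬝ᵥ x 0 - b τ) :=
    (isCompact_range ((ha.dotProduct continuous_const).sub hb)).bddAbove
  have hiter (r : ℕ) : x r ∈ relaxedFeasibleSet F₀ Fi a b G h (max γ₀ M) :=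
    ⟨(hpd r).posSemidef, (convex_linearConstraintSet a b G h _).mem_of_step_mem
      (fun r => Ioc_subset_Icc_self (hst r)) hupd
      ⟨fun τ => (hM (mem_range_self τ)).trans (le_max_right _ _), hx0⟩
      (fun r => ⟨fun τ => (hsi r τ).trans ((hγ r).2.trans (le_max_left _ _)), heq r⟩) r⟩
  rw [← relaxedFeasibleSet_zero] at hfeas_ne hfeas_cpt
  obtain ⟨C, hC⟩ :=
    (isBounded_relaxedFeasibleSet hfeas_ne hfeas_cpt.isBounded (max γ₀ M)).exists_norm_le
  exact ⟨C, fun r => hC _ (hiter r)⟩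

/-- Proposition 1: boundedness of the primal iterates of the interior point SQP-type
method in the affine case `g(x,τ) = a(τ)ᵀx - b(τ)`, assuming the feasible set of the
SISDP is nonempty and compact. -/
theorem stmt_12 {n m s : ℕ} (hn : 1 ≤ n) (hm : 1 ≤ m) (hs : 1 ≤ s)
    {T : Type*} [MetricSpace T] [CompactSpace T]
    (a : T → (Fin n → ℝ)) (b : T → ℝ) (ha : Continuous a) (hb : Continuous b)
    (F₀ : Matrix (Fin m) (Fin m) ℝ) (Fi : Fin n → Matrix (Fin m) (Fin m) ℝ)
    (hF₀ : F₀.IsHermitian) (hFi : ∀ i, (Fi i).IsHermitian)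
    (G : Matrix (Fin s) (Fin n) ℝ) (h : Fin s → ℝ)
    (hfeas_ne : {x : Fin n → ℝ |
        (F₀ + ∑ i, x i • Fi i).PosSemidef ∧ (∀ τ, a τ ⬝ᵥ x ≤ b τ) ∧
          G.mulVec x = h}.Nonempty)
    (hfeas_cpt : IsCompact {x : Fin n → ℝ |
        (F₀ + ∑ i, x i • Fi i).PosSemidef ∧ (∀ τ, a τ ⬝ᵥ x ≤ b τ) ∧
          G.mulVec x = h})
    (γ₀ : ℝ) (hγ₀ : 0 < γ₀)
    (x Δx : ℕ → (Fin n → ℝ)) (st γ : ℕ → ℝ)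
    (hst : ∀ r, st r ∈ Set.Ioc (0 : ℝ) 1)
    (hγ : ∀ r, γ r ∈ Set.Ioc (0 : ℝ) γ₀)
    (hupd : ∀ r, x (r + 1) = x r + st r • Δx r)
    (hx0 : G.mulVec (x 0) = h)
    (heq : ∀ r, G.mulVec (x r + Δx r) = h)
    (hpd : ∀ r, (F₀ + ∑ i, (x r) i • Fi i).PosDef)
    (hsi : ∀ r, ∀ τ, a τ ⬝ᵥ (x r + Δx r) - b τ ≤ γ r) :
    ∃ C : ℝ, ∀ r, ‖x r‖ ≤ C :=
  stmt_12_general a b ha hb F₀ Fi G h hfeas_ne hfeas_cpt γ₀ x Δx st γ hst hγ hupd hx0 heq hpd hsi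
end
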